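/- Let G1 be the graph on nodes {a,b,c,d} with both relations p1(a,b), p2(a,b), p1(c,d), p2(c,d), and let G2 be the graph on the same nodes with relations p1(a,b), p2(a,c), p1(c,d), p2(b,d) (all relations symmetric, no unary predicates). Then the FOC2 formula φ(x) := ∃^{≥1} y (p1(x,y) ∧ p2(x,y)) is true at node a in G1 and false at node a in G2; yet for every L ≥ 0, the following invariance holds: any function on nodes defined by initializing all nodes with the same value and iterating L rounds of an update that combines a node's current value with, for each relation, the multiset of current values of its neighbors via that relation, and the multiset of current values of all nodes, assigns the same value to every node of G1 and every node of G2. -/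

import Mathlib

inductive Var : Type
  | x | y
deriving DecidableEq

structure RelGraph (P1 P2 : Type) where
  V : Type
  [fintV : Fintype V]
  [decV : DecidableEq V]
  unary : P1 → V → Prop
  rel : P2 → V → V → Prop
  [decU : ∀ p, DecidablePred (unary p)]
  [decR : ∀ r, DecidableRel (rel r)]

attribute [instance] RelGraph.fintV RelGraph.decV RelGraph.decU RelGraph.decR

inductive FOC2 (P1 P2 : Type) : Type
  | tru : FOC2 P1 P2
  | atom : P1 → Var → FOC2 P1 P2
  | rel : P2 → Var → Var → FOC2 P1 P2
  | and : FOC2 P1 P2 → FOC2 P1 P2 → FOC2 P1 P2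
  | or : FOC2 P1 P2 → FOC2 P1 P2 → FOC2 P1 P2
  | not : FOC2 P1 P2 → FOC2 P1 P2
  | exge : ℕ → Var → FOC2 P1 P2 → FOC2 P1 P2

variable {P1 P2 : Type}

/-- Satisfaction of a `FOC2` formula in a multi-relational graph under an assignment. -/
def RelGraph.sat (G : RelGraph P1 P2) : (Var → G.V) → FOC2 P1 P2 → Prop
  | _, .tru => True
  | σ, .atom p v => G.unary p (σ v)
  | σ, .rel r u w => G.rel r (σ u) (σ w)
  | σ, .and φ ψ => G.sat σ φ ∧ G.sat σ ψ
  | σ, .or φ ψ => G.sat σ φ ∨ G.sat σ ψ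
  | σ, .not φ => ¬ G.sat σ φ
  | σ, .exge n v φ => ∃ S : Finset G.V, S.card = n ∧ ∀ a ∈ S, G.sat (Function.update σ v a) φ

/-- Quantifier depth. -/
def FOC2.depth : FOC2 P1 P2 → ℕ
  | .tru => 0
  | .atom _ _ => 0
  | .rel _ _ _ => 0
  | .and φ ψ => max φ.depth ψ.depth
  | .or φ ψ => max φ.depth ψ.depth
  | .not φ => φ.depth
  | .exge _ _ φ => φ.depth + 1

/-- All counting thresholds are at most `m`. -/
def FOC2.thresholdsLe (m : ℕ) : FOC2 P1 P2 → Prop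
  | .tru => True
  | .atom _ _ => True
  | .rel _ _ _ => True
  | .and φ ψ => φ.thresholdsLe m ∧ ψ.thresholdsLe m
  | .or φ ψ => φ.thresholdsLe m ∧ ψ.thresholdsLe m
  | .not φ => φ.thresholdsLe m
  | .exge n _ φ => n ≤ m ∧ φ.thresholdsLe m

/-- Free variables. -/
def FOC2.freeVars : FOC2 P1 P2 → Finset Var
  | .tru => ∅
  | .atom _ v => {v}
  | .rel _ u w => {u, w}
  | .and φ ψ => φ.freeVars ∪ ψ.freeVars
  | .or φ ψ => φ.freeVars ∪ ψ.freeVars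
  | .not φ => φ.freeVars
  | .exge _ v φ => φ.freeVars \ {v}

/-- Parse-tree size. -/
def FOC2.size : FOC2 P1 P2 → ℕ
  | .tru => 1
  | .atom _ _ => 1
  | .rel _ _ _ => 1
  | .and φ ψ => φ.size + ψ.size + 1
  | .or φ ψ => φ.size + ψ.size + 1
  | .not φ => φ.size + 1
  | .exge _ _ φ => φ.size + 1

/-- A generic R²-GNN run: per-layer combination functions taking the node's previous
feature, for each relation the multiset of neighbours' features, and the global multiset. -/
def runGNN (G : RelGraph P1 P2) {X : Type} (h0 : G.V → X)
    (C : ℕ → X → (P2 → Multiset X) → Multiset X → X) : ℕ → G.V → X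
  | 0, v => h0 v
  | i + 1, v =>
    C i (runGNN G h0 C i v)
      (fun r => (Finset.univ.filter (fun u => G.rel r v u)).val.map (runGNN G h0 C i))
      (Finset.univ.val.map (runGNN G h0 C i))

/-- Symmetric relation generated by a list of (unordered) pairs of nodes of `Fin 4`. -/
def pairRel (l : List (Fin 4 × Fin 4)) (a b : Fin 4) : Prop :=
  (a, b) ∈ l ∨ (b, a) ∈ l

instance (l : List (Fin 4 × Fin 4)) (a b : Fin 4) : Decidable (pairRel l a b) := by
  unfold pairRel; infer_instance

/-- `G1`: nodes `a,b,c,d = 0,1,2,3`, with both `p1` and `p2` edges `{a,b}` and `{c,d}`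
(`p1 = true`, `p2 = false`). -/
def GA : RelGraph Empty Bool where
  V := Fin 4
  unary := fun e _ => e.elim
  rel := fun r => pairRel (if r then [(0, 1), (2, 3)] else [(0, 1), (2, 3)])
  decU := fun e => e.elim
  decR := fun _ _ _ => by infer_instance

/-- `G2`: nodes `a,b,c,d = 0,1,2,3`, with `p1` edges `{a,b},{c,d}` and
`p2` edges `{a,c},{b,d}`. -/
def GB : RelGraph Empty Bool where
  V := Fin 4
  unary := fun e _ => e.elim
  rel := fun r => pairRel (if r then [(0, 1), (2, 3)] else [(0, 2), (1, 3)])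
  decU := fun e => e.elim
  decR := fun _ _ _ => by infer_instance

/-- `φ(x) = ∃^{≥1} y (p1(x,y) ∧ p2(x,y))`. -/
def phiCyc : FOC2 Empty Bool :=
  FOC2.exge 1 Var.y
    (FOC2.and (FOC2.rel true Var.x Var.y) (FOC2.rel false Var.x Var.y))

/-! Starting from a constant feature, a node's feature after each round depends only on how
many neighbours it has along each relation and on the number of nodes. In both `GA` and `GB`
every node has exactly one neighbour along each relation, so every node of either graph gets
the same value; the formula `phiCyc`, on the other hand, sees whether the two neighbours of `a`
are the same node. -/

theorem RelGraph.sat_exge_one (G : RelGraph P1 P2) (σ : Var → G.V) (v : Var) (φ : FOC2 P1 P2) :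
    G.sat σ (.exge 1 v φ) ↔ ∃ a, G.sat (Function.update σ v a) φ := by
  simp only [RelGraph.sat, Finset.card_eq_one]
  constructor
  · rintro ⟨_, ⟨a, rfl⟩, h⟩
    exact ⟨a, h a (Finset.mem_singleton_self a)⟩
  · rintro ⟨a, h⟩
    exact ⟨{a}, ⟨a, rfl⟩, fun b hb => Finset.mem_singleton.mp hb ▸ h⟩

theorem RelGraph.sat_phiCyc_iff (G : RelGraph Empty Bool) (σ : Var → G.V) :
    G.sat σ phiCyc ↔ ∃ a, G.rel true (σ .x) a ∧ G.rel false (σ .x) a := by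
  simp [phiCyc, RelGraph.sat_exge_one, RelGraph.sat, Function.update]

def RelGraph.degree (G : RelGraph P1 P2) (r : P2) (v : G.V) : ℕ :=
  (Finset.univ.filter (G.rel r v)).card

/-- The value every node takes in an `n`-node graph where each node has exactly `d r`
`r`-neighbours: it depends on nothing else. -/
def regularRun {X : Type} (x0 : X) (C : ℕ → X → (P2 → Multiset X) → Multiset X → X)
    (d : P2 → ℕ) (n : ℕ) : ℕ → X
  | 0 => x0
  | i + 1 =>
    C i (regularRun x0 C d n i) (fun r => .replicate (d r) (regularRun x0 C d n i))
      (.replicate n (regularRun x0 C d n i))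

theorem runGNN_const_eq_regularRun (G : RelGraph P1 P2) {X : Type} (x0 : X)
    (C : ℕ → X → (P2 → Multiset X) → Multiset X → X) {d : P2 → ℕ}
    (hd : ∀ r v, G.degree r v = d r) (L : ℕ) (v : G.V) :
    runGNN G (fun _ => x0) C L v = regularRun x0 C d (Fintype.card G.V) L := by
  induction L generalizing v with
  | zero => rfl
  | succ i ih =>
    have map_const (s : Finset G.V) :
        s.val.map (runGNN G (fun _ => x0) C i) =
          .replicate s.card (regularRun x0 C d (Fintype.card G.V) i) := by
      rw [Multiset.map_congr rfl (fun u _ => ih u), Multiset.map_const']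
      rfl
    simp only [runGNN, regularRun, ih v, map_const, ← hd _ v]
    rfl

theorem GA_degree (r : Bool) (v : GA.V) : GA.degree r v = 1 := by
  revert r v; decide

theorem GB_degree (r : Bool) (v : GB.V) : GB.degree r v = 1 := by
  revert r v; decide

/-- `φ` is true at node `a` in `G1` and false at node `a` in `G2`, yet any iterated
relational message-passing computation with global readout (arbitrary per-layer
combination functions, uniform initialization) assigns the same value to every node of
`G1` and every node of `G2`, for any number `L` of layers. -/
theorem stmt7 :
    (GA.sat (fun _ => (0 : Fin 4)) phiCyc ∧ ¬ GB.sat (fun _ => (0 : Fin 4)) phiCyc) ∧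
    (∀ (X : Type) (x0 : X) (C : ℕ → X → (Bool → Multiset X) → Multiset X → X)
        (L : ℕ) (u : GA.V) (w : GB.V),
      runGNN GA (fun _ => x0) C L u = runGNN GB (fun _ => x0) C L w) := by
  refine ⟨⟨?_, ?_⟩, fun X x0 C L u w => ?_⟩
  · exact (GA.sat_phiCyc_iff _).mpr ⟨(1 : Fin 4), by simp [GA, pairRel]⟩
  · exact fun h => absurd ((GB.sat_phiCyc_iff _).mp h) (by simp [GB, pairRel])
  · rw [runGNN_const_eq_regularRun GA x0 C GA_degree,
      runGNN_const_eq_regularRun GB x0 C GB_degree]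
    rfl
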